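/- Identify the vertex set V with {1, …, n} equipped with its natural cyclic order, and for v ∈ V write v⁺ for the cyclic successor of v. Let 𝒞 = (Cⁱ : i ∈ I) be a nonempty family of directed 8-cycles on V, where Cⁱ has vertex sequence xⁱ₁, …, xⁱ₈, satisfying: (i) the cycles of 𝒞 are mutually vertex-disjoint, and (ii) for every i ∈ I, if (xⁱ₈)⁺ is a vertex of some cycle of 𝒞, then (xⁱ₈)⁺ = x^j₈ for some j ∈ I. To each cycle Cⁱ associate the path Pⁱ with vertex sequence xⁱ₈, xⁱ₁, xⁱ₂, …, xⁱ₇, (xⁱ₈)⁺. Let ([x_j, y_j] : j ∈ 𝒥) be the maximal cyclic intervals contained in the set {xⁱ₈ : i ∈ I}. Then the union of the paths Pⁱ (i ∈ I) is a family of pairwise vertex-disjoint paths (P_j : j ∈ 𝒥), where P_j is a path from x_j to y_j⁺ whose edge set is the union of the edge sets of those Pⁱ with xⁱ₈ ∈ [x_j, y_j] (so P_j has length 8 times the number of elements of the cyclic interval [x_j, y_j]). -/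

import Mathlib

open scoped Classical

noncomputable section

/-- Cyclic successor on `Fin n`. -/
def finNext {n : ℕ} (v : Fin n) : Fin n :=
  ⟨(v.1 + 1) % n, Nat.mod_lt _ (Nat.lt_of_le_of_lt (Nat.zero_le _) v.2)⟩

/-- Cyclic predecessor on `Fin n`. -/
def finPred {n : ℕ} (v : Fin n) : Fin n :=
  ⟨(v.1 + (n - 1)) % n, Nat.mod_lt _ (Nat.lt_of_le_of_lt (Nat.zero_le _) v.2)⟩

/-- `v` lies in the cyclic interval `[a, b]` of `Fin n`. -/
def inCycInt {n : ℕ} (a b v : Fin n) : Prop := (v - a).1 ≤ (b - a).1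

/-- `[a, b]` is a maximal cyclic interval contained in `S`. -/
def IsMaxCycInt {n : ℕ} (S : Set (Fin n)) (a b : Fin n) : Prop :=
  (∀ v, inCycInt a b v → v ∈ S) ∧ finPred a ∉ S ∧ finNext b ∉ S

/-- The (directed) edges of the path `Pⁱ` with vertex sequence
`xⁱ₈, xⁱ₁, xⁱ₂, …, xⁱ₇, (xⁱ₈)⁺` associated to the `8`-cycle `Cⁱ` with vertex
sequence `xⁱ₁, …, xⁱ₈` (here indexed by `Fin 8`, so `xⁱ_j = x i (j-1)`). -/
def pEdge {n : ℕ} {I : Type*} (x : I → Fin 8 → Fin n) (i : I) (u v : Fin n) : Prop :=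
  (u = x i 7 ∧ v = x i 0) ∨
    (∃ j : Fin 8, j.1 < 6 ∧ u = x i j ∧ v = x i (j + 1)) ∨
    (u = x i 6 ∧ v = finNext (x i 7))

/-- The graph whose edges are all edges of the paths `Pⁱ`. -/
def pathGraph {n : ℕ} {I : Type*} (x : I → Fin 8 → Fin n) : SimpleGraph (Fin n) where
  Adj u v := u ≠ v ∧ ∃ i, pEdge x i u v ∨ pEdge x i v u
  symm := ⟨by rintro u v ⟨hne, i, h⟩; exact ⟨hne.symm, i, h.symm⟩⟩
  loopless := ⟨fun v h => h.1 rfl⟩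

/-- The set `{xⁱ₈ : i ∈ I}` of final vertices of the cycles. -/
def lastSet {n : ℕ} {I : Type*} (x : I → Fin 8 → Fin n) : Set (Fin n) :=
  {v | ∃ i, v = x i 7}

/-- The vertices used by the group of paths `Pⁱ` with `xⁱ₈ ∈ [a,b]`. -/
def grpVert {n : ℕ} {I : Type*} (x : I → Fin 8 → Fin n) (a b v : Fin n) : Prop :=
  ∃ i, inCycInt a b (x i 7) ∧ (v ∈ Set.range (x i) ∨ v = finNext (x i 7))


open Fin.NatCast Fin.CommRing

section arith
variable {n : ℕ} [NeZero n]

lemma val_one_eq (hn : 1 < n) : ((1 : Fin n)).1 = 1 := by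
  rw [Fin.val_one']
  exact Nat.mod_eq_of_lt hn

lemma finNext_eq (hn : 1 < n) (v : Fin n) : finNext v = v + 1 := by
  unfold finNext
  apply Fin.ext
  rw [Fin.add_def, val_one_eq hn]

lemma finPred_eq (hn : 1 < n) (v : Fin n) : finPred v = v - 1 := by
  unfold finPred
  apply Fin.ext
  rw [Fin.sub_def, val_one_eq hn]
  simp [Nat.add_comm]

lemma val_add_cast (a : Fin n) {k : ℕ} (hk : k < n) :
    ((a + (k : Fin n)) - a).1 = k := by
  rw [add_comm, add_sub_assoc, sub_self, add_zero, Fin.val_cast_of_lt hk]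

lemma inCycInt_iff (a b v : Fin n) :
    inCycInt a b v ↔ ∃ k : ℕ, k ≤ (b - a).1 ∧ v = a + (k : Fin n) := by
  constructor
  · intro h
    exact ⟨(v - a).1, h, by rw [Fin.cast_val_eq_self]; ring⟩
  · rintro ⟨k, hk, rfl⟩
    have : k < n := lt_of_le_of_lt hk (b - a).2
    unfold inCycInt
    rw [val_add_cast a this]
    exact hk

lemma inCycInt_self (a b : Fin n) : inCycInt a b a := by
  unfold inCycInt; simp

end arith

section maxint
variable {n : ℕ} [NeZero n]

lemma sub_ne_zero_val_pos {v w : Fin n} (h : v ≠ w) : 1 ≤ (v - w).1 := by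
  rcases Nat.eq_zero_or_pos (v - w).1 with h0 | h1
  · exfalso
    apply h
    have : v - w = 0 := Fin.ext h0
    have := sub_eq_zero.mp this
    exact this
  · exact h1

lemma exists_maxCycInt (hn : 1 < n) (S : Set (Fin n)) {v w₀ : Fin n}
    (hv : v ∈ S) (hw₀ : w₀ ∉ S) :
    ∃ a b, IsMaxCycInt S a b ∧ inCycInt a b v := by
  classical
  have hvw : v ≠ w₀ := fun h => hw₀ (h ▸ hv)
  -- forward run
  have Hf : ∃ k : ℕ, v + (k : Fin n) ∉ S := by
    refine ⟨(w₀ - v).1, ?_⟩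
    rw [Fin.cast_val_eq_self]
    have : v + (w₀ - v) = w₀ := by ring
    rw [this]; exact hw₀
  set t := Nat.find Hf with ht_def
  have ht : v + (t : Fin n) ∉ S := Nat.find_spec Hf
  have htmin : ∀ k < t, v + (k : Fin n) ∈ S := by
    intro k hk
    by_contra h
    have := Nat.find_le (h := Hf) h
    omega
  have ht1 : 1 ≤ t := by
    rcases Nat.eq_zero_or_pos t with h0 | h1
    · exfalso; apply ht; rw [h0]; simpa using hv
    · exact h1
  have htlt : t < n := by
    have : t ≤ (w₀ - v).1 := Nat.find_le (by
      rw [Fin.cast_val_eq_self]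
      have : v + (w₀ - v) = w₀ := by ring
      rw [this]; exact hw₀)
    exact lt_of_le_of_lt this (w₀ - v).2
  -- backward run
  have Hb : ∃ k : ℕ, v - ((k + 1 : ℕ) : Fin n) ∉ S := by
    refine ⟨(v - w₀).1 - 1, ?_⟩
    have h1 : 1 ≤ (v - w₀).1 := sub_ne_zero_val_pos hvw
    have : (v - w₀).1 - 1 + 1 = (v - w₀).1 := by omega
    rw [this, Fin.cast_val_eq_self]
    have : v - (v - w₀) = w₀ := by ring
    rw [this]; exact hw₀
  set u := Nat.find Hb with hu_def
  have hu : v - ((u + 1 : ℕ) : Fin n) ∉ S := Nat.find_spec Hb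
  have humin : ∀ k < u, v - ((k + 1 : ℕ) : Fin n) ∈ S := by
    intro k hk
    by_contra h
    have := Nat.find_le (h := Hb) h
    omega
  -- the interval does not wrap: u + t ≤ n
  have hsum : u + t ≤ n := by
    by_contra hns
    push_neg at hns
    apply ht
    have h1 : (t : Fin n) = v + (t : Fin n) - v := by ring
    have key : v + (t : Fin n) = v - ((n - t - 1 + 1 : ℕ) : Fin n) := by
      have hnt : n - t - 1 + 1 = n - t := by omega
      rw [hnt]
      have : ((n - t : ℕ) : Fin n) = -(t : Fin n) := by
        have : ((n - t : ℕ) : Fin n) + (t : Fin n) = 0 := by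
          rw [← Nat.cast_add]
          have : n - t + t = n := by omega
          rw [this, Fin.natCast_self]
        linear_combination this
      rw [this]
      ring
    rw [key]
    exact humin (n - t - 1) (by omega)
  have hD : (v + ((t - 1 : ℕ) : Fin n) - (v - (u : Fin n))).1 = t - 1 + u := by
    have : v + ((t - 1 : ℕ) : Fin n) = (v - (u : Fin n)) + ((t - 1 + u : ℕ) : Fin n) := by
      push_cast [Nat.cast_sub ht1]; ring
    rw [this, val_add_cast _ (by omega)]
  refine ⟨v - (u : Fin n), v + ((t - 1 : ℕ) : Fin n), ⟨?_, ?_, ?_⟩, ?_⟩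
  · -- all of interval in S
    intro w hw
    rw [inCycInt_iff] at hw
    obtain ⟨k, hk, rfl⟩ := hw
    rw [hD] at hk
    rcases lt_trichotomy k u with hku | hku | hku
    · -- w = v - (u - k)
      have : v - (u : Fin n) + (k : Fin n) = v - ((u - k - 1 + 1 : ℕ) : Fin n) := by
        have h2 : (u - k - 1 + 1 : ℕ) = u - k := by omega
        rw [h2, Nat.cast_sub (by omega)]
        ring
      rw [this]
      exact humin (u - k - 1) (by omega)
    · subst hku
      have : v - (u : Fin n) + (u : Fin n) = v := by ring
      rw [this]; exact hv
    · have : v - (u : Fin n) + (k : Fin n) = v + ((k - u : ℕ) : Fin n) := by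
        rw [Nat.cast_sub (by omega)]
        ring
      rw [this]
      exact htmin (k - u) (by omega)
  · -- finPred a ∉ S
    rw [finPred_eq hn]
    have : v - (u : Fin n) - 1 = v - ((u + 1 : ℕ) : Fin n) := by push_cast; ring
    rw [this]; exact hu
  · -- finNext b ∉ S
    rw [finNext_eq hn]
    have : v + ((t - 1 : ℕ) : Fin n) + 1 = v + (t : Fin n) := by
      have : ((t - 1 : ℕ) : Fin n) = (t : Fin n) - 1 := by
        rw [Nat.cast_sub (by omega)]; simp
      rw [this]; ring
    rw [this]; exact ht
  · -- v in interval
    rw [inCycInt_iff]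
    refine ⟨u, ?_, by ring⟩
    rw [hD]; omega

end maxint

section uniq
variable {n : ℕ} [NeZero n]

lemma inCycInt_of_le {a b : Fin n} {k : ℕ} (hk : k ≤ (b - a).1) :
    inCycInt a b (a + (k : Fin n)) := (inCycInt_iff a b _).mpr ⟨k, hk, rfl⟩

lemma eq_add_sub_val (a w : Fin n) : w = a + (((w - a).1 : ℕ) : Fin n) := by
  rw [Fin.cast_val_eq_self]; ring

lemma aux_a {S : Set (Fin n)} {a b a' b' w : Fin n}
    (hmem' : ∀ v, inCycInt a' b' v → v ∈ S) (hpred : a - 1 ∉ S)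
    (hw : inCycInt a b w) (hw' : inCycInt a' b' w) : (w - a').1 ≤ (w - a).1 := by
  by_contra hlt
  push_neg at hlt
  apply hpred
  set d := (w - a).1
  set d' := (w - a').1
  have hdD' : d' ≤ (b' - a').1 := hw'
  have h1 : a - 1 = a' + (((d' - (d + 1)) : ℕ) : Fin n) := by
    have hw1 : w = a + (d : Fin n) := eq_add_sub_val a w
    have hw2 : w = a' + (d' : Fin n) := eq_add_sub_val a' w
    rw [Nat.cast_sub (by omega)]
    push_cast
    have : a = w - (d : Fin n) := by rw [hw1]; ring
    rw [this, hw2]; ring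
  rw [h1]
  exact hmem' _ (inCycInt_of_le (by omega))

lemma aux_b {S : Set (Fin n)} {a b a' b' w : Fin n}
    (hmem' : ∀ v, inCycInt a' b' v → v ∈ S) (hnext : b + 1 ∉ S)
    (hw : inCycInt a b w) (hw' : inCycInt a' b' w) :
    (b' - a').1 - (w - a').1 ≤ (b - a).1 - (w - a).1 := by
  by_contra hlt
  push_neg at hlt
  apply hnext
  set d := (w - a).1
  set D := (b - a).1
  set d' := (w - a').1
  set D' := (b' - a').1
  have hdD : d ≤ D := hw
  have hdD' : d' ≤ D' := hw'
  have h1 : b + 1 = a' + (((d' + (D - d) + 1) : ℕ) : Fin n) := by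
    have hw1 : w = a + (d : Fin n) := eq_add_sub_val a w
    have hw2 : w = a' + (d' : Fin n) := eq_add_sub_val a' w
    have hb : b = a + (D : Fin n) := eq_add_sub_val a b
    have hDd : ((D - d : ℕ) : Fin n) = (D : Fin n) - (d : Fin n) := Nat.cast_sub hdD
    push_cast [hDd]
    have ha : a = w - (d : Fin n) := by rw [hw1]; ring
    rw [hb, ha, hw2]; ring
  rw [h1]
  exact hmem' _ (inCycInt_of_le (by omega))

lemma maxCycInt_unique (hn : 1 < n) {S : Set (Fin n)} {a b a' b' w : Fin n}
    (h : IsMaxCycInt S a b) (h' : IsMaxCycInt S a' b')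
    (hw : inCycInt a b w) (hw' : inCycInt a' b' w) : a = a' ∧ b = b' := by
  obtain ⟨hmem, hpred, hnext⟩ := h
  obtain ⟨hmem', hpred', hnext'⟩ := h'
  rw [finPred_eq hn] at hpred hpred'
  rw [finNext_eq hn] at hnext hnext'
  have hd : (w - a).1 = (w - a').1 :=
    le_antisymm (aux_a hmem hpred' hw' hw) (aux_a hmem' hpred hw hw')
  have he : (b - a).1 - (w - a).1 = (b' - a').1 - (w - a').1 :=
    le_antisymm (aux_b hmem hnext' hw' hw) (aux_b hmem' hnext hw hw')
  constructor
  · have h1 : a = w - (((w - a).1 : ℕ) : Fin n) := by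
      rw [Fin.cast_val_eq_self]; ring
    have h2 : a' = w - (((w - a').1 : ℕ) : Fin n) := by
      rw [Fin.cast_val_eq_self]; ring
    rw [h1, h2, hd]
  · have h1 : b = w + ((((b - a).1 - (w - a).1) : ℕ) : Fin n) := by
      rw [Nat.cast_sub hw]
      push_cast [Fin.cast_val_eq_self]; ring
    have h2 : b' = w + ((((b' - a').1 - (w - a').1) : ℕ) : Fin n) := by
      rw [Nat.cast_sub hw']
      push_cast [Fin.cast_val_eq_self]; ring
    rw [h1, h2, he]

end uniq

section seg
variable {n : ℕ} {I : Type*} {x : I → Fin 8 → Fin n}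

lemma finNext_ne (hn : 2 ≤ n) (v : Fin n) : finNext v ≠ v := by
  haveI : NeZero n := ⟨by omega⟩
  rw [finNext_eq (by omega)]
  intro h
  have : (1 : Fin n) = 0 := by linear_combination h - v
  have := congrArg Fin.val this
  rw [val_one_eq (by omega)] at this
  simp at this

variable (hn : 8 ≤ n)
  (hinj : ∀ i, Function.Injective (x i))
  (hdisj : ∀ i j, i ≠ j → ∀ a b, x i a ≠ x j b)
  (hcompat : ∀ i, (∃ j a, finNext (x i 7) = x j a) → ∃ j, finNext (x i 7) = x j 7)

include hinj hdisj in
lemma cycle_eq {i j : I} {a b : Fin 8} (h : x i a = x j b) : i = j ∧ a = b := by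
  by_cases hij : i = j
  · subst hij; exact ⟨rfl, hinj i h⟩
  · exact absurd h (hdisj i j hij a b)

include hn hinj hdisj hcompat in
lemma next_ne_same {i : I} {r : Fin 8} (h : x i r = finNext (x i 7)) : False := by
  obtain ⟨j', hj'⟩ := hcompat i ⟨i, r, h.symm⟩
  have h2 : x i r = x j' 7 := by rw [h, hj']
  obtain ⟨rfl, rfl⟩ := cycle_eq hinj hdisj h2
  rw [← h2] at hj'
  exact finNext_ne (by omega) _ hj'

include hn hinj hdisj hcompat in
lemma seg_walk (i : I) :
    ∃ p : (pathGraph x).Walk (x i 7) (finNext (x i 7)),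
      p.IsPath ∧ p.length = 8 ∧
      p.support = [x i 7, x i 0, x i 1, x i 2, x i 3, x i 4, x i 5, x i 6,
        finNext (x i 7)] ∧
      (∀ u v : Fin n, s(u,v) ∈ p.edges ↔ (pEdge x i u v ∨ pEdge x i v u)) := by
  have hne : ∀ (r s : Fin 8), r ≠ s → x i r ≠ x i s := fun r s h hx => h (hinj i hx)
  have hnen : ∀ r : Fin 8, x i r ≠ finNext (x i 7) := fun r h =>
    next_ne_same hn hinj hdisj hcompat h
  have a70 : (pathGraph x).Adj (x i 7) (x i 0) :=
    ⟨hne 7 0 (by decide), i, Or.inl (Or.inl ⟨rfl, rfl⟩)⟩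
  have amid : ∀ r : Fin 8, r.1 < 6 → (pathGraph x).Adj (x i r) (x i (r+1)) := by
    intro r hr
    refine ⟨hne r (r+1) ?_, i, Or.inl (Or.inr (Or.inl ⟨r, hr, rfl, rfl⟩))⟩
    intro h
    have := congrArg Fin.val h
    rw [Fin.val_add_one_of_lt (by omega : r < Fin.last 7)] at this
    omega
  have a6n : (pathGraph x).Adj (x i 6) (finNext (x i 7)) :=
    ⟨hnen 6, i, Or.inl (Or.inr (Or.inr ⟨rfl, rfl⟩))⟩
  have e01 : x i (0+1) = x i 1 := congrArg (x i) (by decide)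
  have e12 : x i (1+1) = x i 2 := congrArg (x i) (by decide)
  have e23 : x i (2+1) = x i 3 := congrArg (x i) (by decide)
  have e34 : x i (3+1) = x i 4 := congrArg (x i) (by decide)
  have e45 : x i (4+1) = x i 5 := congrArg (x i) (by decide)
  have e56 : x i (5+1) = x i 6 := congrArg (x i) (by decide)
  have a01 := amid 0 (by decide); rw [e01] at a01
  have a12 := amid 1 (by decide); rw [e12] at a12
  have a23 := amid 2 (by decide); rw [e23] at a23
  have a34 := amid 3 (by decide); rw [e34] at a34
  have a45 := amid 4 (by decide); rw [e45] at a45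
  have a56 := amid 5 (by decide); rw [e56] at a56
  refine ⟨.cons a70 (.cons a01 (.cons a12 (.cons a23 (.cons a34 (.cons a45
    (.cons a56 (.cons a6n .nil))))))), ?_, rfl, rfl, ?_⟩
  · rw [SimpleGraph.Walk.isPath_def]
    show List.Nodup _
    have hrw : ([x i 7, x i 0, x i 1, x i 2, x i 3, x i 4, x i 5, x i 6,
        finNext (x i 7)] : List (Fin n))
        = (List.map (x i) [7,0,1,2,3,4,5,6]) ++ [finNext (x i 7)] := rfl
    show ([x i 7, x i 0, x i 1, x i 2, x i 3, x i 4, x i 5, x i 6,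
        finNext (x i 7)] : List (Fin n)).Nodup
    rw [hrw]
    refine List.Nodup.append (List.Nodup.map (hinj i) (by decide))
      (List.nodup_singleton _) ?_
    intro v hvl hvr
    rw [List.mem_singleton] at hvr
    subst hvr
    rw [List.mem_map] at hvl
    obtain ⟨r, _, hr⟩ := hvl
    exact hnen r hr
  · intro u v
    constructor
    · intro h
      simp only [SimpleGraph.Walk.edges_cons, SimpleGraph.Walk.edges_nil,
        List.mem_cons, List.not_mem_nil, or_false] at h
      rcases h with h|h|h|h|h|h|h|h <;>
        rcases Sym2.eq_iff.1 h with ⟨rfl, rfl⟩|⟨rfl, rfl⟩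
      · exact Or.inl (Or.inl ⟨rfl, rfl⟩)
      · exact Or.inr (Or.inl ⟨rfl, rfl⟩)
      · exact Or.inl (Or.inr (Or.inl ⟨0, by decide, rfl, e01.symm⟩))
      · exact Or.inr (Or.inr (Or.inl ⟨0, by decide, rfl, e01.symm⟩))
      · exact Or.inl (Or.inr (Or.inl ⟨1, by decide, rfl, e12.symm⟩))
      · exact Or.inr (Or.inr (Or.inl ⟨1, by decide, rfl, e12.symm⟩))
      · exact Or.inl (Or.inr (Or.inl ⟨2, by decide, rfl, e23.symm⟩))
      · exact Or.inr (Or.inr (Or.inl ⟨2, by decide, rfl, e23.symm⟩))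
      · exact Or.inl (Or.inr (Or.inl ⟨3, by decide, rfl, e34.symm⟩))
      · exact Or.inr (Or.inr (Or.inl ⟨3, by decide, rfl, e34.symm⟩))
      · exact Or.inl (Or.inr (Or.inl ⟨4, by decide, rfl, e45.symm⟩))
      · exact Or.inr (Or.inr (Or.inl ⟨4, by decide, rfl, e45.symm⟩))
      · exact Or.inl (Or.inr (Or.inl ⟨5, by decide, rfl, e56.symm⟩))
      · exact Or.inr (Or.inr (Or.inl ⟨5, by decide, rfl, e56.symm⟩))
      · exact Or.inl (Or.inr (Or.inr ⟨rfl, rfl⟩))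
      · exact Or.inr (Or.inr (Or.inr ⟨rfl, rfl⟩))
    · have hfwd : ∀ u v : Fin n, pEdge x i u v →
          s(u,v) ∈ (SimpleGraph.Walk.cons a70 (.cons a01 (.cons a12 (.cons a23
            (.cons a34 (.cons a45 (.cons a56 (.cons a6n .nil)))))))).edges := by
        intro u v hE
        simp only [SimpleGraph.Walk.edges_cons, SimpleGraph.Walk.edges_nil,
          List.mem_cons, List.not_mem_nil, or_false]
        rcases hE with ⟨rfl, rfl⟩ | ⟨j, hj, rfl, rfl⟩ | ⟨rfl, rfl⟩
        · exact Or.inl rfl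
        · have h6 : j.1 = 0 ∨ j.1 = 1 ∨ j.1 = 2 ∨ j.1 = 3 ∨ j.1 = 4 ∨ j.1 = 5 := by omega
          rcases h6 with h|h|h|h|h|h
          · have e : j = 0 := Fin.ext (by rw [h]; decide); subst e
            rw [e01]; exact Or.inr (Or.inl rfl)
          · have e : j = 1 := Fin.ext (by rw [h]; decide); subst e
            rw [e12]; exact Or.inr (Or.inr (Or.inl rfl))
          · have e : j = 2 := Fin.ext (by rw [h]; decide); subst e
            rw [e23]; exact Or.inr (Or.inr (Or.inr (Or.inl rfl)))
          · have e : j = 3 := Fin.ext (by rw [h]; decide); subst e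
            rw [e34]; exact Or.inr (Or.inr (Or.inr (Or.inr (Or.inl rfl))))
          · have e : j = 4 := Fin.ext (by rw [h]; decide); subst e
            rw [e45]; exact Or.inr (Or.inr (Or.inr (Or.inr (Or.inr (Or.inl rfl)))))
          · have e : j = 5 := Fin.ext (by rw [h]; decide); subst e
            rw [e56]; exact Or.inr (Or.inr (Or.inr (Or.inr (Or.inr (Or.inr (Or.inl rfl))))))
        · exact Or.inr (Or.inr (Or.inr (Or.inr (Or.inr (Or.inr (Or.inr rfl))))))
      rintro (hE | hE)
      · exact hfwd u v hE
      · rw [Sym2.eq_swap]; exact hfwd v u hE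

end seg

section build
variable {n : ℕ} [NeZero n] {I : Type*} {x : I → Fin 8 → Fin n}
variable (hn : 8 ≤ n)
  (hinj : ∀ i, Function.Injective (x i))
  (hdisj : ∀ i j, i ≠ j → ∀ a b, x i a ≠ x j b)
  (hcompat : ∀ i, (∃ j a, finNext (x i 7) = x j a) → ∃ j, finNext (x i 7) = x j 7)

lemma inCycInt_same {a v : Fin n} (h : inCycInt a a v) : v = a := by
  have h2 : (v - a).1 ≤ (a - a).1 := h
  rw [sub_self] at h2
  simp only [Fin.val_zero, Nat.le_zero] at h2
  have : v - a = 0 := Fin.ext h2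
  have := sub_eq_zero.mp this
  exact this

include hn hinj hdisj hcompat in
lemma build_walk : ∀ (d : ℕ) (a b : Fin n), (b - a).1 = d →
    (∀ v, inCycInt a b v → v ∈ lastSet x) → finNext b ∉ lastSet x →
    ∃ p : (pathGraph x).Walk a (finNext b), p.IsPath ∧ p.length = 8 * (d + 1) ∧
      (∀ v, v ∈ p.support → grpVert x a b v) ∧
      (∀ u v, s(u,v) ∈ p.edges ↔
        ∃ i, inCycInt a b (x i 7) ∧ (pEdge x i u v ∨ pEdge x i v u)) := by
  intro d
  induction d with
  | zero =>
    intro a b hd hmem hlastb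
    have hba : b = a := by
      have : b - a = 0 := Fin.ext (by rw [hd]; rfl)
      exact sub_eq_zero.mp this
    subst hba
    obtain ⟨i, ha⟩ := hmem b (inCycInt_self b b)
    subst ha
    obtain ⟨p, hpath, hlen, hsupp, hedge⟩ := seg_walk hn hinj hdisj hcompat i
    refine ⟨p, hpath, by omega, ?_, ?_⟩
    · intro v hv
      rw [hsupp] at hv
      simp only [List.mem_cons, List.not_mem_nil, or_false] at hv
      refine ⟨i, inCycInt_self _ _, ?_⟩
      rcases hv with rfl|rfl|rfl|rfl|rfl|rfl|rfl|rfl|rfl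
      exacts [Or.inl ⟨7, rfl⟩, Or.inl ⟨0, rfl⟩, Or.inl ⟨1, rfl⟩, Or.inl ⟨2, rfl⟩,
        Or.inl ⟨3, rfl⟩, Or.inl ⟨4, rfl⟩, Or.inl ⟨5, rfl⟩, Or.inl ⟨6, rfl⟩, Or.inr rfl]
    · intro u v
      rw [hedge u v]
      constructor
      · intro h; exact ⟨i, inCycInt_self _ _, h⟩
      · rintro ⟨j, hj, h⟩
        have : x j 7 = x i 7 := inCycInt_same hj
        obtain ⟨rfl, -⟩ := cycle_eq hinj hdisj this
        exact h
  | succ d IH =>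
    intro a b hd hmem hlastb
    have hdn : d + 1 < n := by rw [← hd]; exact (b - a).2
    obtain ⟨i, ha⟩ := hmem a (inCycInt_self a b)
    have hba : b = a + ((d + 1 : ℕ) : Fin n) := by
      rw [← hd, Fin.cast_val_eq_self]; ring
    -- the interval can't be everything
    have hd2 : d + 2 < n := by
      by_contra hc
      push_neg at hc
      have hdn2 : d + 2 = n := by omega
      apply hlastb
      have : finNext b = a := by
        rw [finNext_eq (by omega), hba]
        have : ((d + 1 : ℕ) : Fin n) + 1 = ((d + 2 : ℕ) : Fin n) := by push_cast; ring
        rw [add_assoc, this, hdn2, Fin.natCast_self, add_zero]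
      rw [this, ha]
      exact ⟨i, rfl⟩
    have ha1S : inCycInt a b (a + 1) := by
      rw [inCycInt_iff]
      exact ⟨1, by omega, by push_cast; ring⟩
    have hb_sub : (b - (a + 1)).1 = d := by
      have : b - (a + 1) = ((d : ℕ) : Fin n) := by
        rw [hba]; push_cast; ring
      rw [this, Fin.val_cast_of_lt (by omega)]
    have hsub1 : ∀ v, inCycInt (a + 1) b v → inCycInt a b v := by
      intro v hv
      rw [inCycInt_iff] at hv ⊢
      obtain ⟨k, hk, rfl⟩ := hv
      rw [hb_sub] at hk
      exact ⟨k + 1, by omega, by push_cast; ring⟩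
    obtain ⟨q, qpath, qlen, qsupp, qedge⟩ := IH (a + 1) b hb_sub
      (fun v hv => hmem v (hsub1 v hv)) hlastb
    have hnext_a : finNext (x i 7) = a + 1 := by rw [← ha, finNext_eq (by omega)]
    obtain ⟨sp, spath, slen, ssupp, sedge⟩ := seg_walk hn hinj hdisj hcompat i
    -- cast the segment to start at `a`
    let sp' : (pathGraph x).Walk a (a + 1) := sp.copy ha.symm hnext_a
    have ssupp' : sp'.support = [x i 7, x i 0, x i 1, x i 2, x i 3, x i 4, x i 5,
        x i 6, a + 1] := by
      simp only [sp', SimpleGraph.Walk.support_copy]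
      rw [ssupp, hnext_a]
    have sedge' : ∀ u v : Fin n, s(u,v) ∈ sp'.edges ↔ (pEdge x i u v ∨ pEdge x i v u) := by
      intro u v
      simp only [sp', SimpleGraph.Walk.edges_copy]
      exact sedge u v
    refine ⟨sp'.append q, ?_, ?_, ?_, ?_⟩
    · -- IsPath
      rw [SimpleGraph.Walk.isPath_def, SimpleGraph.Walk.support_append,
        List.nodup_append]
      refine ⟨by rw [← SimpleGraph.Walk.isPath_def]; exact (SimpleGraph.Walk.isPath_copy _ _ _).2 spath,
        (qpath.support_nodup).tail, ?_⟩
      intro v hvl v' hvr hvv'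
      subst hvv'
      have hvq : v ∈ q.support := List.mem_of_mem_tail hvr
      have hvne : v ≠ a + 1 := by
        intro hva
        have := qpath.support_nodup
        rw [q.support_eq_cons] at this
        rw [List.nodup_cons] at this
        exact this.1 (hva ▸ hvr)
      rw [ssupp'] at hvl
      simp only [List.mem_cons, List.not_mem_nil, or_false] at hvl
      -- v is a vertex of cycle i (possibly x i 7 = a) or a+1
      have hvcyc : ∃ r : Fin 8, v = x i r := by
        rcases hvl with rfl|rfl|rfl|rfl|rfl|rfl|rfl|rfl|rfl
        exacts [⟨7, rfl⟩, ⟨0, rfl⟩, ⟨1, rfl⟩, ⟨2, rfl⟩, ⟨3, rfl⟩, ⟨4, rfl⟩,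
          ⟨5, rfl⟩, ⟨6, rfl⟩, absurd rfl hvne]
      obtain ⟨r, rfl⟩ := hvcyc
      obtain ⟨j, hj, hvj⟩ := qsupp _ hvq
      rcases hvj with ⟨s, hs⟩ | hnx
      · -- x i r = x j s : same cycle, so x i 7 ∈ [a+1, b], impossible
        obtain ⟨rfl, rfl⟩ := cycle_eq hinj hdisj hs.symm
        have : (x i 7 - (a + 1)).1 ≤ d := by rw [← hb_sub]; exact hj
        have hval : (x i 7 - (a + 1)).1 = n - 1 := by
          have h1 : x i 7 = (a + 1) + ((n - 1 : ℕ) : Fin n) := by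
            rw [← ha, Nat.cast_sub (by omega), Fin.natCast_self]
            push_cast; ring
          rw [h1, val_add_cast _ (by omega)]
        omega
      · -- x i r = finNext (x j 7) : then it is x i 7 = a, and x j 7 = a - 1 ∈ [a+1,b]
        obtain ⟨j', hj'⟩ := hcompat j ⟨i, r, hnx.symm⟩
        have h2 : x i r = x j' 7 := by rw [hnx, hj']
        obtain ⟨rfl, rfl⟩ := cycle_eq hinj hdisj h2
        -- now finNext (x j 7) = x i 7 = a, so x j 7 = a - 1
        have hxj : x j 7 = a - 1 := by
          have : finNext (x j 7) = a := by rw [← hnx, ← ha]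
          rw [finNext_eq (by omega)] at this
          linear_combination this
        have : (x j 7 - (a + 1)).1 ≤ d := by rw [← hb_sub]; exact hj
        have hval : (x j 7 - (a + 1)).1 = n - 2 := by
          have h1 : x j 7 = (a + 1) + ((n - 2 : ℕ) : Fin n) := by
            rw [hxj, Nat.cast_sub (by omega), Fin.natCast_self]
            push_cast; ring
          rw [h1, val_add_cast _ (by omega)]
        omega
    · rw [SimpleGraph.Walk.length_append, qlen]
      have : sp'.length = 8 := by
        simp only [sp', SimpleGraph.Walk.length_copy]; exact slen
      rw [this]; ring
    · intro v hv
      rw [SimpleGraph.Walk.support_append, List.mem_append] at hv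
      rcases hv with hv | hv
      · rw [ssupp'] at hv
        simp only [List.mem_cons, List.not_mem_nil, or_false] at hv
        refine ⟨i, by rw [← ha]; exact inCycInt_self a b, ?_⟩
        rcases hv with rfl|rfl|rfl|rfl|rfl|rfl|rfl|rfl|rfl
        exacts [Or.inl ⟨7, rfl⟩, Or.inl ⟨0, rfl⟩, Or.inl ⟨1, rfl⟩, Or.inl ⟨2, rfl⟩,
          Or.inl ⟨3, rfl⟩, Or.inl ⟨4, rfl⟩, Or.inl ⟨5, rfl⟩, Or.inl ⟨6, rfl⟩,
          Or.inr (by rw [hnext_a])]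
      · obtain ⟨j, hj, hvj⟩ := qsupp v (List.mem_of_mem_tail hv)
        exact ⟨j, hsub1 _ hj, hvj⟩
    · intro u v
      rw [SimpleGraph.Walk.edges_append, List.mem_append]
      constructor
      · rintro (h | h)
        · exact ⟨i, by rw [← ha]; exact inCycInt_self a b, (sedge' u v).1 h⟩
        · obtain ⟨j, hj, hEj⟩ := (qedge u v).1 h
          exact ⟨j, hsub1 _ hj, hEj⟩
      · rintro ⟨j, hj, hEj⟩
        rw [inCycInt_iff] at hj
        obtain ⟨k, hk, hxj⟩ := hj
        rw [hd] at hk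
        rcases Nat.eq_zero_or_pos k with hk0 | hk1
        · subst hk0
          simp only [Nat.cast_zero, add_zero] at hxj
          rw [ha] at hxj
          obtain ⟨rfl, -⟩ := cycle_eq hinj hdisj hxj
          exact Or.inl ((sedge' u v).2 hEj)
        · refine Or.inr ((qedge u v).2 ⟨j, ?_, hEj⟩)
          rw [inCycInt_iff]
          refine ⟨k - 1, by omega, ?_⟩
          rw [hxj, Nat.cast_sub (by omega)]
          push_cast; ring

end build

section ncard
variable {n : ℕ} [NeZero n]

lemma cyc_ncard (a b : Fin n) :
    {v : Fin n | inCycInt a b v}.ncard = (b - a).1 + 1 := by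
  have hset : {v : Fin n | inCycInt a b v}
      = (fun k : ℕ => a + (k : Fin n)) '' (Set.Iio ((b - a).1 + 1)) := by
    ext v
    rw [Set.mem_setOf_eq, inCycInt_iff]
    constructor
    · rintro ⟨k, hk, rfl⟩; exact ⟨k, Set.mem_Iio.mpr (by omega), rfl⟩
    · rintro ⟨k, hk, rfl⟩
      exact ⟨k, by simp only [Set.mem_Iio] at hk; omega, rfl⟩
  rw [hset]
  have hinj : Set.InjOn (fun k : ℕ => a + (k : Fin n)) (Set.Iio ((b - a).1 + 1)) := by
    intro k1 hk1 k2 hk2 h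
    simp only [Set.mem_Iio] at hk1 hk2
    have hb := (b - a).2
    have e1 : ((a + (k1 : Fin n)) - a).1 = k1 := val_add_cast a (by omega)
    have e2 : ((a + (k2 : Fin n)) - a).1 = k2 := val_add_cast a (by omega)
    simp only at h
    rw [← e1, ← e2, h]
  rw [Set.ncard_image_of_injOn hinj]
  have : (Set.Iio ((b - a).1 + 1) : Set ℕ) = ↑(Finset.range ((b - a).1 + 1)) := by
    ext k; simp
  rw [this, Set.ncard_coe_finset, Finset.card_range]

end ncard
/-- **The twisting construction.** A compatible family of directed `8`-cycles yields,
for each maximal cyclic interval `[a,b]` of the set of final vertices, a path from `a`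
to `b⁺` of length `8·|[a,b]|` formed by the paths `Pⁱ` with `xⁱ₈ ∈ [a,b]`; these paths
are pairwise vertex-disjoint and together use all the `Pⁱ`. -/
theorem twisting_paths {n : ℕ} (hn : 8 ≤ n) {I : Type*} [Nonempty I]
    (x : I → Fin 8 → Fin n)
    (hinj : ∀ i, Function.Injective (x i))
    (hdisj : ∀ i j, i ≠ j → ∀ a b, x i a ≠ x j b)
    (hcompat : ∀ i, (∃ j a, finNext (x i 7) = x j a) → ∃ j, finNext (x i 7) = x j 7) :
    (∀ i, ∃ a b, IsMaxCycInt (lastSet x) a b ∧ inCycInt a b (x i 7)) ∧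
    (∀ a b, IsMaxCycInt (lastSet x) a b →
      ∃ p : (pathGraph x).Walk a (finNext b), p.IsPath ∧
        p.length = 8 * {v : Fin n | inCycInt a b v}.ncard ∧
        (∀ u v : Fin n, s(u, v) ∈ p.edges ↔
          ∃ i, inCycInt a b (x i 7) ∧ (pEdge x i u v ∨ pEdge x i v u))) ∧
    (∀ a b a' b', IsMaxCycInt (lastSet x) a b → IsMaxCycInt (lastSet x) a' b' →
      (a ≠ a' ∨ b ≠ b') →
      ∀ v, ¬(grpVert x a b v ∧ grpVert x a' b' v)) := by

  haveI : NeZero n := ⟨by omega⟩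
  have h1 : (1 : ℕ) < n := by omega
  -- a vertex not in `lastSet x`
  have hw₀ : x (Classical.arbitrary I) 0 ∉ lastSet x := by
    rintro ⟨j, hj⟩
    obtain ⟨rfl, h07⟩ := cycle_eq hinj hdisj hj
    exact absurd h07 (by decide)
  refine ⟨?_, ?_, ?_⟩
  · intro i
    exact exists_maxCycInt h1 (lastSet x) ⟨i, rfl⟩ hw₀
  · rintro a b ⟨hmem, hpred, hnext⟩
    obtain ⟨p, hpath, hlen, hsupp, hedge⟩ :=
      build_walk hn hinj hdisj hcompat (b - a).1 a b rfl hmem hnext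
    refine ⟨p, hpath, ?_, hedge⟩
    rw [hlen, cyc_ncard a b]
  · rintro a b a' b' hI hI' hne v ⟨⟨i, hi7, hv⟩, ⟨i', hi7', hv'⟩⟩
    -- mixed-case helper: if `v` is a cycle vertex and also the successor of a last
    -- vertex of an interval, then `v = x j' 7` lies in that interval
    have mixed : ∀ (a₀ b₀ : Fin n) (i₀ i₁ : I) (r : Fin 8),
        IsMaxCycInt (lastSet x) a₀ b₀ → inCycInt a₀ b₀ (x i₁ 7) →
        x i₀ r = finNext (x i₁ 7) →
        ∃ j', x i₀ r = x j' 7 ∧ inCycInt a₀ b₀ (x i₀ r) := by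
      intro a₀ b₀ i₀ i₁ r hI₀ h7 hEq
      obtain ⟨j', hj'⟩ := hcompat i₁ ⟨i₀, r, hEq.symm⟩
      have hv7 : x i₀ r = x j' 7 := by rw [hEq, hj']
      refine ⟨j', hv7, ?_⟩
      obtain ⟨hmem₀, hpred₀, hnext₀⟩ := hI₀
      rw [inCycInt_iff] at h7
      obtain ⟨k, hk, h7e⟩ := h7
      have hkD : k < (b₀ - a₀).1 := by
        rcases lt_or_eq_of_le hk with h | h
        · exact h
        · exfalso
          apply hnext₀
          have hb₀ : b₀ = a₀ + (((b₀ - a₀).1 : ℕ) : Fin n) := eq_add_sub_val a₀ b₀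
          have : finNext b₀ = x i₀ r := by
            rw [finNext_eq h1, hb₀, ← h, ← h7e, ← finNext_eq h1, ← hEq]
          rw [this, hv7]
          exact ⟨j', rfl⟩
      rw [inCycInt_iff]
      refine ⟨k + 1, by omega, ?_⟩
      rw [hEq, finNext_eq h1, h7e]
      push_cast; ring
    have hkey : ∃ w, inCycInt a b w ∧ inCycInt a' b' w := by
      rcases hv with ⟨r, hr⟩ | hnx
      · rcases hv' with ⟨r', hr'⟩ | hnx'
        · have : x i r = x i' r' := by rw [hr, hr']
          obtain ⟨rfl, -⟩ := cycle_eq hinj hdisj this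
          exact ⟨x i 7, hi7, hi7'⟩
        · obtain ⟨j', hv7, hmemv⟩ := mixed a' b' i i' r hI' hi7' (by rw [hr, hnx'])
          refine ⟨x i r, ?_, hmemv⟩
          have : x i r = x i 7 := by
            obtain ⟨rfl, rfl⟩ := cycle_eq hinj hdisj hv7
            rfl
          rw [this]; exact hi7
      · rcases hv' with ⟨r', hr'⟩ | hnx'
        · obtain ⟨j', hv7, hmemv⟩ := mixed a b i' i r' hI hi7 (by rw [hr', hnx])
          refine ⟨x i' r', hmemv, ?_⟩
          have : x i' r' = x i' 7 := by
            obtain ⟨rfl, rfl⟩ := cycle_eq hinj hdisj hv7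
            rfl
          rw [this]; exact hi7'
        · have : finNext (x i 7) = finNext (x i' 7) := by rw [← hnx, ← hnx']
          rw [finNext_eq h1, finNext_eq h1] at this
          have h77 : x i 7 = x i' 7 := by linear_combination this
          exact ⟨x i 7, hi7, h77 ▸ hi7'⟩
    obtain ⟨w, hw, hw'⟩ := hkey
    obtain ⟨heqa, heqb⟩ := maxCycInt_unique h1 hI hI' hw hw'
    rcases hne with h | h
    · exact h heqa
    · exact h heqb
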